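/- arXiv:2509.23397 — 3 statements merged into one kernel-verified Lean document; each statement's English description precedes it below -/
import Mathlib

section
/- The basic reproduction number R0(α) = sqrt( (βH·βM·(NM/NH)·α) / (k·μ·((1 + bρ/μ)·(L/NH) + α)^2) ), viewed as a function of α ∈ (0,1], attains its unique maximum at α* = (1 + bρ/μ)·(L/NH), provided all parameters βH, βM, NM, NH, k, μ, b, ρ, L are positive and α* ≤ 1; i.e., R0 is strictly increasing on (0, α*) and strictly decreasing on (α*, 1]. -/
/-! Writing `s = α*`, we have `R0(α)² = c · α / (s + α)²` with `c > 0`, and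
`y (s + x)² - x (s + y)² = (y - x)(s² - x y)`. Hence `α ↦ α / (s + α)²` increases
while `x y < s²`, i.e. on `[0, s]`, and decreases once `x y > s²`, i.e. on `[s, ∞)`;
scaling by `c` and taking the square root preserve this. -/

open Set

lemma div_add_sq_lt_div_add_sq_iff {s x y : ℝ} (hx : 0 < s + x) (hy : 0 < s + y) :
    x / (s + x) ^ 2 < y / (s + y) ^ 2 ↔ 0 < (y - x) * (s ^ 2 - x * y) := by
  rw [div_lt_div_iff₀ (by positivity) (by positivity), ← sub_pos]
  congr! 1
  ring

lemma strictMonoOn_div_add_sq_Icc (s : ℝ) :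
    StrictMonoOn (fun x => x / (s + x) ^ 2) (Icc 0 s) := by
  rintro x ⟨hx0, hxs⟩ y ⟨hy0, hys⟩ hxy
  rw [div_add_sq_lt_div_add_sq_iff (by linarith) (by linarith)]
  have hprod : x * y < s ^ 2 := by nlinarith
  exact mul_pos (sub_pos.2 hxy) (sub_pos.2 hprod)

lemma strictAntiOn_div_add_sq_Ici {s : ℝ} (hs : 0 < s) :
    StrictAntiOn (fun x => x / (s + x) ^ 2) (Ici s) := by
  intro x hx y hy hxy
  simp only [mem_Ici] at hx hy
  rw [div_add_sq_lt_div_add_sq_iff (by linarith) (by linarith)]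
  have hprod : s ^ 2 < y * x := by nlinarith
  exact mul_pos_of_neg_of_neg (sub_neg.2 hxy) (sub_neg.2 hprod)

lemma StrictMonoOn.sqrt_const_mul {f : ℝ → ℝ} {S : Set ℝ} {c : ℝ} (hc : 0 < c)
    (hf : StrictMonoOn f S) (hf0 : ∀ x ∈ S, 0 ≤ f x) :
    StrictMonoOn (fun x => √(c * f x)) S := fun x hx _ hy hxy =>
  Real.sqrt_lt_sqrt (mul_nonneg hc.le (hf0 x hx)) (mul_lt_mul_of_pos_left (hf hx hy hxy) hc)

lemma StrictAntiOn.sqrt_const_mul {f : ℝ → ℝ} {S : Set ℝ} {c : ℝ} (hc : 0 < c)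
    (hf : StrictAntiOn f S) (hf0 : ∀ x ∈ S, 0 ≤ f x) :
    StrictAntiOn (fun x => √(c * f x)) S := fun _ hx y hy hxy =>
  Real.sqrt_lt_sqrt (mul_nonneg hc.le (hf0 y hy)) (mul_lt_mul_of_pos_left (hf hx hy hxy) hc)

theorem stmt0_general (βH βM NM NH k μ b ρ L : ℝ)
    (hβH : 0 < βH) (hβM : 0 < βM) (hNM : 0 < NM) (hNH : 0 < NH)
    (hk : 0 < k) (hμ : 0 < μ) (hb : 0 < b) (hρ : 0 < ρ) (hL : 0 < L)
    (R0 : ℝ → ℝ)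
    (hR0 : ∀ α, R0 α =
      Real.sqrt ((βH * βM * (NM / NH) * α) /
        (k * μ * ((1 + b * ρ / μ) * (L / NH) + α) ^ 2)))
    (αstar : ℝ) (hαstar : αstar = (1 + b * ρ / μ) * (L / NH)) :
    StrictMonoOn R0 (Set.Ioo 0 αstar) ∧ StrictAntiOn R0 (Set.Ioc αstar 1) := by
  have hc : 0 < βH * βM * (NM / NH) / (k * μ) := by positivity
  have hs : 0 < αstar := by rw [hαstar]; positivity
  have hR0_eq : R0 = fun α => √(βH * βM * (NM / NH) / (k * μ) * (α / (αstar + α) ^ 2)) := by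
    funext α
    rw [hR0, hαstar, mul_div_mul_comm]
  rw [hR0_eq]
  constructor
  · refine ((strictMonoOn_div_add_sq_Icc αstar).sqrt_const_mul hc ?_).mono Ioo_subset_Icc_self
    exact fun x hx => div_nonneg hx.1 (sq_nonneg _)
  · refine ((strictAntiOn_div_add_sq_Ici hs).sqrt_const_mul hc ?_).mono
      (Ioc_subset_Ioi_self.trans Ioi_subset_Ici_self)
    exact fun x hx => div_nonneg (hs.le.trans hx) (sq_nonneg _)

/-- The basic reproduction number `R0(α)` attains its unique maximum at
`α* = (1 + bρ/μ)·(L/NH)`: it is strictly increasing on `(0, α*)` and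
strictly decreasing on `(α*, 1]`. -/
theorem stmt0 (βH βM NM NH k μ b ρ L : ℝ)
    (hβH : 0 < βH) (hβM : 0 < βM) (hNM : 0 < NM) (hNH : 0 < NH)
    (hk : 0 < k) (hμ : 0 < μ) (hb : 0 < b) (hρ : 0 < ρ) (hL : 0 < L)
    (R0 : ℝ → ℝ)
    (hR0 : ∀ α, R0 α =
      Real.sqrt ((βH * βM * (NM / NH) * α) /
        (k * μ * ((1 + b * ρ / μ) * (L / NH) + α) ^ 2)))
    (αstar : ℝ) (hαstar : αstar = (1 + b * ρ / μ) * (L / NH))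
    (hα1 : αstar ≤ 1) :
    StrictMonoOn R0 (Set.Ioo 0 αstar) ∧ StrictAntiOn R0 (Set.Ioc αstar 1) :=
  stmt0_general βH βM NM NH k μ b ρ L hβH hβM hNM hNH hk hμ hb hρ hL R0 hR0 αstar hαstar
end

section
/- Let A0 = L + α·NH with NH > 0, α ∈ (0,1], L ≥ 0, μ > 0, b > 0, ρ ≥ 0. Then the inequality α·(2μA0 + bρL)/(A0·(μA0 + bρL)) > 1/NH holds if and only if L/NH < α·sqrt(μ/(μ + bρ)). -/
/-! Clearing denominators and writing `α·NH = A0 - L`, the criterion becomes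
`μ·(A0 - L)² - (μ + bρ)·L² > 0`, i.e. `(μ + bρ)·L² < μ·(α·NH)²`; since `L` and `α·NH` are
nonnegative, this is the square of the threshold inequality. -/

lemma lt_mul_sqrt_div_iff {x y μ k : ℝ} (hx : 0 ≤ x) (hy : 0 ≤ y) (hk : 0 < k) :
    x < y * √(μ / k) ↔ k * x ^ 2 < μ * y ^ 2 := by
  rw [← Real.sqrt_sq hy, ← Real.sqrt_mul (sq_nonneg y), Real.lt_sqrt hx, mul_div_assoc',
    lt_div_iff₀ hk, Real.sqrt_sq hy]
  constructor <;> intro h <;> linarith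

theorem stmt5_general (α μ b ρ L NH : ℝ)
    (hNH : 0 < NH) (hα : 0 < α) (hμ : 0 < μ) (hb : 0 < b)
    (hρ : 0 ≤ ρ) (hL : 0 ≤ L)
    (A0 : ℝ) (hA0 : A0 = L + α * NH) :
    (α * (2 * μ * A0 + b * ρ * L) / (A0 * (μ * A0 + b * ρ * L)) > 1 / NH)
      ↔ L / NH < α * Real.sqrt (μ / (μ + b * ρ)) := by
  have hden : 0 < A0 * (μ * A0 + b * ρ * L) := by rw [hA0]; positivity
  have key : α * (2 * μ * A0 + b * ρ * L) * NH - 1 * (A0 * (μ * A0 + b * ρ * L)) =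
      μ * (α * NH) ^ 2 - (μ + b * ρ) * L ^ 2 := by
    rw [hA0]; ring
  rw [gt_iff_lt, div_lt_div_iff₀ hNH hden, ← sub_pos, key, sub_pos, div_lt_iff₀ hNH,
    mul_right_comm, lt_mul_sqrt_div_iff hL (by positivity) (by positivity)]

/-- The rational inequality in the backward-bifurcation criterion is
equivalent to the explicit threshold `L/NH < α·√(μ/(μ+bρ))`. -/
theorem stmt5 (α μ b ρ L NH : ℝ)
    (hNH : 0 < NH) (hα : 0 < α) (hα1 : α ≤ 1) (hμ : 0 < μ) (hb : 0 < b)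
    (hρ : 0 ≤ ρ) (hL : 0 ≤ L)
    (A0 : ℝ) (hA0 : A0 = L + α * NH) :
    (α * (2 * μ * A0 + b * ρ * L) / (A0 * (μ * A0 + b * ρ * L)) > 1 / NH)
      ↔ L / NH < α * Real.sqrt (μ / (μ + b * ρ)) :=
  stmt5_general α μ b ρ L NH hNH hα hμ hb hρ hL A0 hA0
end

section
/- For the 3×3 matrix J = [[−d−Q−δ, P−δ, S],[Q, −P−γ−d, −S],[0, −N, −U]] with d, γ, δ > 0 and P, Q, S, N, U > 0 satisfying (γ+d)U − NS = (γ+d)·μ·c for some μ, c > 0, the Routh–Hurwitz conditions hold, and therefore every eigenvalue of J has strictly negative real part. -/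
/-!
With `a₁ = -tr J`, `a₂` the sum of the principal `2 × 2` minors and `a₃ = -det J`, the
characteristic polynomial of `J` is `λ³ + a₁λ² + a₂λ + a₃`. Substituting
`N S = (γ + d)(U - μc)` turns `a₁`, `a₂`, `a₃` and even `a₁a₂ - a₃` into polynomials with
positive coefficients in the remaining parameters, so the Routh–Hurwitz conditions hold.
-/

open Matrix Polynomial

namespace Matrix

variable {R : Type*} [CommRing R]

def sumPrincipalMinorsTwo (A : Matrix (Fin 3) (Fin 3) R) : R :=
  A 0 0 * A 1 1 - A 0 1 * A 1 0 + A 0 0 * A 2 2 - A 0 2 * A 2 0 + A 1 1 * A 2 2 - A 1 2 * A 2 1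

theorem eval_charpoly_fin_three (A : Matrix (Fin 3) (Fin 3) R) (z : R) :
    A.charpoly.eval z = z ^ 3 - A.trace * z ^ 2 + A.sumPrincipalMinorsTwo * z - A.det := by
  rw [charpoly, ← coe_evalRingHom, RingHom.map_det, det_fin_three, det_fin_three, trace_fin_three,
    sumPrincipalMinorsTwo]
  simp only [RingHom.mapMatrix_apply, coe_evalRingHom, map_apply, charmatrix_apply_eq, eval_sub,
    eval_X, eval_C, ne_eq, Fin.reduceEq, not_false_eq_true, charmatrix_apply_ne, eval_neg]
  ring

end Matrix

/- For a root `x + iy` with `y ≠ 0` and `x ≥ 0`, the imaginary part of the equation gives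
`y² = 3x² + 2a₁x + a₂`; substituting this into the real part leaves
`8x³ + 8a₁x² + 2(a₂ + a₁²)x + (a₁a₂ - a₃) = 0`, whose left side is positive. -/
theorem re_neg_of_cubic_routh_hurwitz {a₁ a₂ a₃ : ℝ} (h₁ : 0 < a₁) (h₃ : 0 < a₃)
    (h₁₂ : a₃ < a₁ * a₂) {z : ℂ} (hz : z ^ 3 + a₁ * z ^ 2 + a₂ * z + a₃ = 0) : z.re < 0 := by
  have h₂ : 0 < a₂ := by nlinarith
  obtain ⟨x, y⟩ := z
  simp only [Complex.ext_iff, pow_succ, pow_zero, one_mul, Complex.mul_re, Complex.mul_im,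
    Complex.add_re, Complex.add_im, Complex.ofReal_re, Complex.ofReal_im, Complex.zero_re,
    Complex.zero_im] at hz
  obtain ⟨hre, him⟩ := hz
  show x < 0
  by_contra! hx
  rcases eq_or_ne y 0 with rfl | hy
  · nlinarith [mul_nonneg hx (sq_nonneg x)]
  · have hy2 : y ^ 2 = 3 * x ^ 2 + 2 * a₁ * x + a₂ := by
      have : y * (3 * x ^ 2 - y ^ 2 + 2 * a₁ * x + a₂) = 0 := by linear_combination him
      linarith [(mul_eq_zero.mp this).resolve_left hy]
    have hx_root : 8 * x ^ 3 + 8 * a₁ * x ^ 2 + 2 * (a₂ + a₁ ^ 2) * x + (a₁ * a₂ - a₃) = 0 := by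
      linear_combination (-1) * hre - (3 * x + a₁) * hy2
    nlinarith [mul_nonneg hx (sq_nonneg x), sq_nonneg x]

theorem Matrix.re_neg_of_isRoot_charpoly_map_ofReal (A : Matrix (Fin 3) (Fin 3) ℝ)
    (h₁ : A.trace < 0) (h₃ : A.det < 0) (h₁₂ : -A.det < -A.trace * A.sumPrincipalMinorsTwo)
    {z : ℂ} (hz : (A.map (↑)).charpoly.IsRoot z) : z.re < 0 := by
  refine re_neg_of_cubic_routh_hurwitz (neg_pos.2 h₁) (neg_pos.2 h₃) h₁₂ ?_
  rw [IsRoot, eval_charpoly_fin_three] at hz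
  rw [← hz, trace_fin_three, trace_fin_three, det_fin_three, det_fin_three, sumPrincipalMinorsTwo,
    sumPrincipalMinorsTwo]
  simp only [map_apply]
  push_cast
  ring

theorem stmt9_general (d γ δ μ c P Q S N U : ℝ)
    (hd : 0 < d) (hγ : 0 < γ) (hδ : 0 < δ) (hμ : 0 < μ) (hc : 0 < c)
    (hP : 0 < P) (hQ : 0 < Q) (hU : 0 < U)
    (hid : (γ + d) * U - N * S = (γ + d) * μ * c)
    (J : Matrix (Fin 3) (Fin 3) ℝ)
    (hJ : J = !![-d - Q - δ, P - δ, S;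
                 Q, -P - γ - d, -S;
                 0, -N, -U]) :
    ∀ z : ℂ, (J.map (fun x : ℝ => (x : ℂ))).charpoly.IsRoot z → z.re < 0 := by
  subst hJ
  have htrace : trace !![-d - Q - δ, P - δ, S; Q, -P - γ - d, -S; 0, -N, -U]
      = -((d + Q + δ) + (P + γ + d) + U) := by
    rw [trace_fin_three_of]
    ring
  have hminors : sumPrincipalMinorsTwo !![-d - Q - δ, P - δ, S; Q, -P - γ - d, -S; 0, -N, -U]
      = (d + δ) * (P + γ + d) + (γ + d + δ) * Q + (d + Q + δ + P) * U + (γ + d) * μ * c := by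
    simp only [sumPrincipalMinorsTwo, of_apply, cons_val', cons_val_zero, cons_val_one, cons_val,
      cons_val_fin_one]
    linear_combination hid
  have hdet : det !![-d - Q - δ, P - δ, S; Q, -P - γ - d, -S; 0, -N, -U]
      = -(((d + δ) * P + (γ + d + δ) * Q) * U + (d + δ) * (γ + d) * μ * c) := by
    simp only [det_fin_three, of_apply, cons_val', cons_val_zero, cons_val_one, cons_val,
      cons_val_fin_one]
    linear_combination (-(d + δ)) * hid
  intro z hz
  refine re_neg_of_isRoot_charpoly_map_ofReal _ ?_ ?_ ?_ hz
  · rw [htrace]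
    linarith
  · rw [hdet, neg_lt_zero]
    positivity
  · rw [htrace, hminors, hdet, neg_neg, neg_neg, ← sub_pos]
    ring_nf
    positivity

/-- For the Jacobian `J` of the reduced mosquito-borne model at the endemic
equilibrium, every eigenvalue has strictly negative real part. -/
theorem stmt9 (d γ δ μ c P Q S N U : ℝ)
    (hd : 0 < d) (hγ : 0 < γ) (hδ : 0 < δ) (hμ : 0 < μ) (hc : 0 < c)
    (hP : 0 < P) (hQ : 0 < Q) (hS : 0 < S) (hN : 0 < N) (hU : 0 < U)
    (hid : (γ + d) * U - N * S = (γ + d) * μ * c)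
    (J : Matrix (Fin 3) (Fin 3) ℝ)
    (hJ : J = !![-d - Q - δ, P - δ, S;
                 Q, -P - γ - d, -S;
                 0, -N, -U]) :
    ∀ z : ℂ, (J.map (fun x : ℝ => (x : ℂ))).charpoly.IsRoot z → z.re < 0 :=
  stmt9_general d γ δ μ c P Q S N U hd hγ hδ hμ hc hP hQ hU hid J hJ
end
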